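/- arXiv:2012.00780 — 3 statements merged into one kernel-verified Lean document; each statement's English description precedes it below -/
import Mathlib

section
/- Let n ≥ 1 and γ ≥ 0, let μ, ρ : ℝⁿ → ℝ be continuous functions with μ(x) > 0 and ρ(x) > 0 for all x, let χ : ℝⁿ → ℝ be continuous with compact support, and let f : ℝ → ℝ be continuously differentiable on (0, ∞). Assume that x ↦ f(ρ(x)/μ(x))·μ(x) and x ↦ ρ(x)·log ρ(x) are Lebesgue-integrable on ℝⁿ. Then the function ε ↦ ∫_{ℝⁿ} f((ρ(x)+ε·χ(x))/μ(x))·μ(x) dx + γ·∫_{ℝⁿ} (ρ(x)+ε·χ(x))·log(ρ(x)+ε·χ(x)) dx has derivative at ε = 0 equal to ∫_{ℝⁿ} [ f'(ρ(x)/μ(x)) + γ·log ρ(x) + γ ]·χ(x) dx. -/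
/-!
Both terms of the functional are integrals of a perspective `μ φ(ρ/μ)` of a function `φ` that is
`C¹` on `(0, ∞)`: the entropy term is the case `μ = 1`, `φ t = t log t`. Near `ε = 0` the
perturbed density `ρ + εχ` stays positive, uniformly on the compact support `K` of `χ`, so the
arguments `(ρ + εχ)/μ` over `K` and small `|ε|` fill a compact subset of `(0, ∞)`, on which `φ'`
is bounded by some `C`. The `ε`-derivative `φ'((ρ + εχ)/μ) χ` of the integrand is therefore
dominated by the integrable function `C |χ|`, and one may differentiate under the integral sign.
-/

open MeasureTheory Real Set Filter Topology Metric

lemma eventually_forall_pos_add_mul {X : Type*} [TopologicalSpace X] {ρ χ : X → ℝ}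
    (hρ : Continuous ρ) (hρpos : ∀ x, 0 < ρ x) (hχ : Continuous χ) (hχs : HasCompactSupport χ) :
    ∀ᶠ ε in 𝓝 (0 : ℝ), ∀ x, 0 < ρ x + ε * χ x := by
  have hK : ∀ᶠ ε in 𝓝 (0 : ℝ), ∀ x ∈ tsupport χ, 0 < ρ x + ε * χ x := by
    refine hχs.isCompact.eventually_forall_of_forall_eventually fun x _ => ?_
    have hcont : Continuous fun p : ℝ × X => ρ p.2 + p.1 * χ p.2 := by fun_prop
    exact continuousAt_const.eventually_lt hcont.continuousAt (by simpa using hρpos x)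
  filter_upwards [hK] with ε hε x
  by_cases hx : x ∈ tsupport χ
  · exact hε x hx
  · simpa [image_eq_zero_of_notMem_tsupport hx] using hρpos x

lemma exists_bound_comp_div_of_continuousOn {X : Type*} [TopologicalSpace X]
    {g : ℝ → ℝ} (hg : ContinuousOn g (Ioi 0)) {μ ρ χ : X → ℝ} (hμ : Continuous μ)
    (hμpos : ∀ x, 0 < μ x) (hρ : Continuous ρ) (hχ : Continuous χ) (hχs : HasCompactSupport χ)
    {r : ℝ} (hpos : ∀ ε ∈ closedBall (0 : ℝ) r, ∀ x, 0 < ρ x + ε * χ x) :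
    ∃ C, ∀ ε ∈ closedBall (0 : ℝ) r, ∀ x ∈ tsupport χ, ‖g ((ρ x + ε * χ x) / μ x)‖ ≤ C := by
  set u : ℝ × X → ℝ := fun p => (ρ p.2 + p.1 * χ p.2) / μ p.2
  have hu : Continuous u :=
    ((hρ.comp continuous_snd).add (continuous_fst.mul (hχ.comp continuous_snd))).div
      (hμ.comp continuous_snd) fun p => (hμpos p.2).ne'
  have himage : IsCompact (u '' (closedBall 0 r ×ˢ tsupport χ)) :=
    ((isCompact_closedBall 0 r).prod hχs.isCompact).image hu
  have hsub : u '' (closedBall 0 r ×ˢ tsupport χ) ⊆ Ioi 0 := by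
    rintro _ ⟨⟨ε, x⟩, ⟨hε, -⟩, rfl⟩
    exact div_pos (hpos ε hε x) (hμpos x)
  obtain ⟨C, hC⟩ := himage.exists_bound_of_continuousOn (hg.mono hsub)
  exact ⟨C, fun ε hε x hx => hC _ ⟨(ε, x), ⟨hε, hx⟩, rfl⟩⟩

lemma hasDerivAt_perspective_add_mul {φ : ℝ → ℝ} {a c m ε : ℝ}
    (hφ : DifferentiableAt ℝ φ ((a + ε * c) / m)) (hm : m ≠ 0) :
    HasDerivAt (fun ε => φ ((a + ε * c) / m) * m) (deriv φ ((a + ε * c) / m) * c) ε := by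
  have hline : HasDerivAt (fun ε => (a + ε * c) / m) (c / m) ε :=
    (((hasDerivAt_id ε).mul_const c).const_add a).div_const m |>.congr_deriv (by simp)
  exact ((hφ.hasDerivAt.comp ε hline).mul_const m).congr_deriv (by field_simp)

section

variable {X : Type*} [TopologicalSpace X] [MeasurableSpace X] [OpensMeasurableSpace X]
  {ν : Measure X} [IsFiniteMeasureOnCompacts ν]

theorem hasDerivAt_integral_perspective_add_mul {φ : ℝ → ℝ} (hφ : ContDiffOn ℝ 1 φ (Ioi 0))
    {μ ρ χ : X → ℝ} (hμ : Continuous μ) (hμpos : ∀ x, 0 < μ x) (hρ : Continuous ρ)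
    (hρpos : ∀ x, 0 < ρ x) (hχ : Continuous χ) (hχs : HasCompactSupport χ)
    (hint : Integrable (fun x => φ (ρ x / μ x) * μ x) ν) :
    Integrable (fun x => deriv φ (ρ x / μ x) * χ x) ν ∧
      HasDerivAt (fun ε => ∫ x, φ ((ρ x + ε * χ x) / μ x) * μ x ∂ν)
        (∫ x, deriv φ (ρ x / μ x) * χ x ∂ν) 0 := by
  obtain ⟨r, hr, hpos⟩ := nhds_basis_closedBall.mem_iff.mp
    (eventually_forall_pos_add_mul hρ hρpos hχ hχs)
  replace hpos : ∀ ε ∈ closedBall (0 : ℝ) r, ∀ x, 0 < ρ x + ε * χ x := fun ε hε => hpos hε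
  have hφ' : ContinuousOn (deriv φ) (Ioi 0) := hφ.continuousOn_deriv_of_isOpen isOpen_Ioi le_rfl
  obtain ⟨C, hC⟩ := exists_bound_comp_div_of_continuousOn hφ' hμ hμpos hρ hχ hχs hpos
  have harg : ∀ ε ∈ closedBall (0 : ℝ) r, ∀ x, (ρ x + ε * χ x) / μ x ∈ Ioi 0 :=
    fun ε hε x => div_pos (hpos ε hε x) (hμpos x)
  have hline : ∀ ε : ℝ, Continuous fun x => (ρ x + ε * χ x) / μ x := fun ε => by
    have := fun x => (hμpos x).ne'
    fun_prop (disch := assumption)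
  have hmeas : ∀ᶠ ε in 𝓝 (0 : ℝ),
      AEStronglyMeasurable (fun x => φ ((ρ x + ε * χ x) / μ x) * μ x) ν := by
    filter_upwards [closedBall_mem_nhds (0 : ℝ) hr] with ε hε
    exact ((hφ.continuousOn.comp_continuous (hline ε) (harg ε hε)).mul hμ).aestronglyMeasurable
  have hmeas' : AEStronglyMeasurable (fun x => deriv φ ((ρ x + 0 * χ x) / μ x) * χ x) ν :=
    ((hφ'.comp_continuous (hline 0) (harg 0 (mem_closedBall_self hr.le))).mul
      hχ).aestronglyMeasurable
  have hbound : ∀ᵐ x ∂ν, ∀ ε ∈ closedBall (0 : ℝ) r,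
      ‖deriv φ ((ρ x + ε * χ x) / μ x) * χ x‖ ≤ C * ‖χ x‖ := by
    refine .of_forall fun x ε hε => ?_
    rw [norm_mul]
    by_cases hx : x ∈ tsupport χ
    · exact mul_le_mul_of_nonneg_right (hC ε hε x hx) (norm_nonneg _)
    · simp [image_eq_zero_of_notMem_tsupport hx]
  have hdiff : ∀ᵐ x ∂ν, ∀ ε ∈ closedBall (0 : ℝ) r,
      HasDerivAt (fun ε => φ ((ρ x + ε * χ x) / μ x) * μ x)
        (deriv φ ((ρ x + ε * χ x) / μ x) * χ x) ε := by
    refine .of_forall fun x ε hε => hasDerivAt_perspective_add_mul ?_ (hμpos x).ne'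
    exact (hφ.differentiableOn one_ne_zero).differentiableAt (isOpen_Ioi.mem_nhds (harg ε hε x))
  simpa only [zero_mul, add_zero] using hasDerivAt_integral_of_dominated_loc_of_deriv_le
    (closedBall_mem_nhds (0 : ℝ) hr) hmeas (by simpa using hint) hmeas' hbound
    ((hχ.integrable_of_hasCompactSupport hχs).norm.const_mul C) hdiff

theorem hasDerivAt_integral_mul_log_add_mul {ρ χ : X → ℝ} (hρ : Continuous ρ)
    (hρpos : ∀ x, 0 < ρ x) (hχ : Continuous χ) (hχs : HasCompactSupport χ)
    (hint : Integrable (fun x => ρ x * log (ρ x)) ν) :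
    Integrable (fun x => (log (ρ x) + 1) * χ x) ν ∧
      HasDerivAt (fun ε => ∫ x, (ρ x + ε * χ x) * log (ρ x + ε * χ x) ∂ν)
        (∫ x, (log (ρ x) + 1) * χ x ∂ν) 0 := by
  have hmul_log : ContDiffOn ℝ 1 (fun t => t * log t) (Ioi 0) :=
    contDiffOn_id.mul (contDiffOn_log.mono fun t ht => ne_of_gt ht)
  have hderiv : ∀ x, deriv (fun t => t * log t) (ρ x) = log (ρ x) + 1 :=
    fun x => deriv_mul_log (hρpos x).ne'
  simpa only [div_one, mul_one, hderiv] using hasDerivAt_integral_perspective_add_mul hmul_log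
    continuous_const (fun _ => one_pos) hρ hρpos hχ hχs (by simpa using hint)

end

theorem first_variation_entropy_regularized_f_divergence_general (n : ℕ)
    (γ : ℝ)
    (μ ρ χ : (Fin n → ℝ) → ℝ) (f : ℝ → ℝ)
    (hμc : Continuous μ) (hρc : Continuous ρ)
    (hμpos : ∀ x, 0 < μ x) (hρpos : ∀ x, 0 < ρ x)
    (hχc : Continuous χ) (hχsupp : HasCompactSupport χ)
    (hf : ContDiffOn ℝ 1 f (Set.Ioi (0 : ℝ)))
    (hint1 : Integrable (fun x => f (ρ x / μ x) * μ x) volume)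
    (hint2 : Integrable (fun x => ρ x * Real.log (ρ x)) volume) :
    HasDerivAt
      (fun ε : ℝ =>
        (∫ x, f ((ρ x + ε * χ x) / μ x) * μ x) +
          γ * ∫ x, (ρ x + ε * χ x) * Real.log (ρ x + ε * χ x))
      (∫ x, (deriv f (ρ x / μ x) + γ * Real.log (ρ x) + γ) * χ x) 0 := by
  obtain ⟨hint1', hdiv⟩ :=
    hasDerivAt_integral_perspective_add_mul hf hμc hμpos hρc hρpos hχc hχsupp hint1
  obtain ⟨hint2', hent⟩ := hasDerivAt_integral_mul_log_add_mul hρc hρpos hχc hχsupp hint2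
  refine (hdiv.add (hent.const_mul γ)).congr_deriv ?_
  rw [← integral_const_mul, ← integral_add hint1' (hint2'.const_mul γ)]
  congr 1 with x
  ring

/-- First variation of the entropy-regularized f-divergence functional
`F(ρ) = ∫ f(ρ/μ) μ + γ ∫ ρ log ρ` in direction `χ`:
the derivative at `ε = 0` equals `∫ (f'(ρ/μ) + γ log ρ + γ) χ`. -/
theorem first_variation_entropy_regularized_f_divergence (n : ℕ) (hn : 1 ≤ n)
    (γ : ℝ) (hγ : 0 ≤ γ)
    (μ ρ χ : (Fin n → ℝ) → ℝ) (f : ℝ → ℝ)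
    (hμc : Continuous μ) (hρc : Continuous ρ)
    (hμpos : ∀ x, 0 < μ x) (hρpos : ∀ x, 0 < ρ x)
    (hχc : Continuous χ) (hχsupp : HasCompactSupport χ)
    (hf : ContDiffOn ℝ 1 f (Set.Ioi (0 : ℝ)))
    (hint1 : Integrable (fun x => f (ρ x / μ x) * μ x) volume)
    (hint2 : Integrable (fun x => ρ x * Real.log (ρ x)) volume) :
    HasDerivAt
      (fun ε : ℝ =>
        (∫ x, f ((ρ x + ε * χ x) / μ x) * μ x) +
          γ * ∫ x, (ρ x + ε * χ x) * Real.log (ρ x + ε * χ x))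
      (∫ x, (deriv f (ρ x / μ x) + γ * Real.log (ρ x) + γ) * χ x) 0 :=
  first_variation_entropy_regularized_f_divergence_general n γ μ ρ χ f hμc hρc hμpos hρpos hχc
    hχsupp hf hint1 hint2
end

section
/- Let n ≥ 1 and let g : ℝⁿ → ℝⁿ be an injective measurable function such that at every z ∈ ℝⁿ, g is differentiable with derivative J(z) (a continuous linear map ℝⁿ → ℝⁿ) and det J(z) ≠ 0. Let p, p̂ : ℝⁿ → [0, ∞) be measurable functions with the same support, i.e., {z : p(z) > 0} = {z : p̂(z) > 0}. Let λ denote Lebesgue measure on ℝⁿ and suppose q, q̂ : ℝⁿ → [0, ∞) satisfy (λ.withDensity p).map g = λ.withDensity q and (λ.withDensity p̂).map g = λ.withDensity q̂. Then for λ-almost every z ∈ ℝⁿ, p̂(z)·q(g(z)) = p(z)·q̂(g(z)); in particular, for λ-almost every z with p(z) > 0 and q(g(z)) > 0, the density-ratio satisfies p̂(z)/p(z) = q̂(g(z))/q(g(z)). -/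
open MeasureTheory Real

/-- Lemma 2 of the paper (equidimensional case): the density-ratio in latent space
equals the density-ratio of the pushforward densities in data space. -/
theorem latent_density_ratio (n : ℕ) (hn : 1 ≤ n)
    (g : (Fin n → ℝ) → (Fin n → ℝ)) (hginj : Function.Injective g)
    (hgmeas : Measurable g)
    (J : (Fin n → ℝ) → ((Fin n → ℝ) →L[ℝ] (Fin n → ℝ)))
    (hJ : ∀ z, HasFDerivAt g (J z) z) (hJdet : ∀ z, (J z).det ≠ 0)
    (p phat q qhat : (Fin n → ℝ) → ℝ)
    (hp : Measurable p) (hp0 : ∀ z, 0 ≤ p z)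
    (hphat : Measurable phat) (hphat0 : ∀ z, 0 ≤ phat z)
    (hq : Measurable q) (hq0 : ∀ x, 0 ≤ q x)
    (hqhat : Measurable qhat) (hqhat0 : ∀ x, 0 ≤ qhat x)
    (hsupp : {z | 0 < p z} = {z | 0 < phat z})
    (hpush : (volume.withDensity (fun z => ENNReal.ofReal (p z))).map g
      = volume.withDensity (fun x => ENNReal.ofReal (q x)))
    (hpushhat : (volume.withDensity (fun z => ENNReal.ofReal (phat z))).map g
      = volume.withDensity (fun x => ENNReal.ofReal (qhat x))) :
    (∀ᵐ z ∂(volume : Measure (Fin n → ℝ)), phat z * q (g z) = p z * qhat (g z)) ∧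
    (∀ᵐ z ∂(volume : Measure (Fin n → ℝ)),
      0 < p z → 0 < q (g z) → phat z / p z = qhat (g z) / q (g z)) := by
  have hdet_meas : Measurable fun z => (J z).det := by
    have hfe : (fun z => (J z).det) = fun z => (fderiv ℝ g z).det := by
      funext z; rw [(hJ z).fderiv]
    rw [hfe]
    exact ContinuousLinearMap.continuous_det.measurable.comp (measurable_fderiv ℝ g)
  -- key: for any pair (r, u) with the pushforward property, r = |det J| * u ∘ g a.e.
  have key : ∀ (r u : (Fin n → ℝ) → ℝ), Measurable r → (∀ z, 0 ≤ r z) →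
      Measurable u → (∀ z, 0 ≤ u z) →
      (volume.withDensity (fun z => ENNReal.ofReal (r z))).map g
        = volume.withDensity (fun x => ENNReal.ofReal (u x)) →
      ∀ᵐ z ∂(volume : Measure (Fin n → ℝ)), r z = |(J z).det| * u (g z) := by
    intro r u hr hr0 hu hu0 hmap
    have hae : (fun z => ENNReal.ofReal (r z))
        =ᵐ[(volume : Measure (Fin n → ℝ))]
        (fun z => ENNReal.ofReal |(J z).det| * ENNReal.ofReal (u (g z))) := by
      apply ae_eq_of_forall_setLIntegral_eq_of_sigmaFinite
      · exact hr.ennreal_ofReal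
      · exact ((hdet_meas.abs).ennreal_ofReal).mul ((hu.comp hgmeas).ennreal_ofReal)
      · intro s hs _
        have himg : ∫⁻ x in g '' s, ENNReal.ofReal (u x)
            = ∫⁻ x in s, ENNReal.ofReal |(J x).det| * ENNReal.ofReal (u (g x)) := by
          exact lintegral_image_eq_lintegral_abs_det_fderiv_mul volume hs
            (fun x _ => (hJ x).hasFDerivWithinAt) (hginj.injOn) _
        have hmeas_img : MeasurableSet (g '' s) := by
          have hcont : Continuous g := by
            rw [continuous_iff_continuousAt]; exact fun z => (hJ z).continuousAt
          exact (hcont.measurableEmbedding hginj).measurableSet_image.2 hs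
        have h1 : ((volume.withDensity (fun z => ENNReal.ofReal (r z))).map g) (g '' s)
            = ∫⁻ x in s, ENNReal.ofReal (r x) := by
          rw [Measure.map_apply hgmeas hmeas_img, Set.preimage_image_eq s hginj,
            withDensity_apply _ hs]
        have h2 : (volume.withDensity (fun x => ENNReal.ofReal (u x))) (g '' s)
            = ∫⁻ x in g '' s, ENNReal.ofReal (u x) := withDensity_apply _ hmeas_img
        rw [← h1, hmap, h2, himg]
    filter_upwards [hae] with z hz
    have h' : ENNReal.ofReal (r z) = ENNReal.ofReal (|(J z).det| * u (g z)) := by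
      rw [hz, ENNReal.ofReal_mul (abs_nonneg _)]
    exact (ENNReal.ofReal_eq_ofReal_iff (hr0 z)
      (mul_nonneg (abs_nonneg _) (hu0 (g z)))).1 h'
  have h1 := key p q hp hp0 hq hq0 hpush
  have h2 := key phat qhat hphat hphat0 hqhat hqhat0 hpushhat
  have main : ∀ᵐ z ∂(volume : Measure (Fin n → ℝ)),
      phat z * q (g z) = p z * qhat (g z) := by
    filter_upwards [h1, h2] with z e1 e2
    rw [e1, e2]; ring
  refine ⟨main, ?_⟩
  filter_upwards [main] with z hz hpz hqz
  rw [div_eq_div_iff hpz.ne' hqz.ne']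
  linarith
end

section
/- Let n ≥ 1 and let g : ℝⁿ → ℝⁿ be an injective measurable function such that at every z ∈ ℝⁿ, g is differentiable with derivative J(z) and det J(z) ≠ 0. Let λ denote Lebesgue measure on ℝⁿ, let p : ℝⁿ → [0, ∞) be a measurable latent (prior) density, let μ_d : ℝⁿ → [0, ∞) be a measurable target data density, and define the latent target density p̂(z) = μ_d(g(z))·|det J(z)|. Suppose q : ℝⁿ → [0, ∞) satisfies (λ.withDensity p).map g = λ.withDensity q. Then for λ-almost every z ∈ ℝⁿ, p̂(z)·q(g(z)) = p(z)·μ_d(g(z)); in particular, for λ-almost every z with q(g(z)) > 0 and μ_d(g(z)) > 0, p(z)/p̂(z) = q(g(z))/μ_d(g(z)). -/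
open MeasureTheory Real

/-- Eq. (12) of the paper (equidimensional case): with latent target density
`p̂(z) = μ_d(g z) |det J(z)|`, the ratio of the prior latent density to `p̂` equals
the data-space density-ratio `q(g z)/μ_d(g z)`. -/
theorem latent_prior_to_target_ratio (n : ℕ) (hn : 1 ≤ n)
    (g : (Fin n → ℝ) → (Fin n → ℝ)) (hginj : Function.Injective g)
    (hgmeas : Measurable g)
    (J : (Fin n → ℝ) → ((Fin n → ℝ) →L[ℝ] (Fin n → ℝ)))
    (hJ : ∀ z, HasFDerivAt g (J z) z) (hJdet : ∀ z, (J z).det ≠ 0)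
    (p μd q : (Fin n → ℝ) → ℝ)
    (hp : Measurable p) (hp0 : ∀ z, 0 ≤ p z)
    (hμd : Measurable μd) (hμd0 : ∀ x, 0 ≤ μd x)
    (hq : Measurable q) (hq0 : ∀ x, 0 ≤ q x)
    (phat : (Fin n → ℝ) → ℝ)
    (hphat : phat = fun z => μd (g z) * |(J z).det|)
    (hpush : (volume.withDensity (fun z => ENNReal.ofReal (p z))).map g
      = volume.withDensity (fun x => ENNReal.ofReal (q x))) :
    (∀ᵐ z ∂(volume : Measure (Fin n → ℝ)), phat z * q (g z) = p z * μd (g z)) ∧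
    (∀ᵐ z ∂(volume : Measure (Fin n → ℝ)),
      0 < q (g z) → 0 < μd (g z) → p z / phat z = q (g z) / μd (g z)) := by
  have hgc : Continuous g := by
    rw [continuous_iff_continuousAt]; exact fun z => (hJ z).continuousAt
  have hE : MeasurableEmbedding g := hgc.measurableEmbedding hginj
  have hdetmeas : Measurable fun z => (J z).det := by
    have h1 : (fun z => (J z).det) = fun z => (fderiv ℝ g z).det :=
      funext fun z => by rw [(hJ z).fderiv]
    rw [h1]
    exact ContinuousLinearMap.continuous_det.measurable.comp (measurable_fderiv ℝ g)
  have key : (fun z => ENNReal.ofReal (p z)) =ᵐ[(volume : Measure (Fin n → ℝ))]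
      fun z => ENNReal.ofReal |(J z).det| * ENNReal.ofReal (q (g z)) := by
    apply ae_eq_of_forall_setLIntegral_eq_of_sigmaFinite
    · exact hp.ennreal_ofReal
    · exact (hdetmeas.abs.ennreal_ofReal).mul ((hq.comp hgmeas).ennreal_ofReal)
    intro s hs _
    calc ∫⁻ z in s, ENNReal.ofReal (p z) ∂volume
        = (volume.withDensity (fun z => ENNReal.ofReal (p z))) s :=
          (withDensity_apply _ hs).symm
      _ = ((volume.withDensity (fun z => ENNReal.ofReal (p z))).map g) (g '' s) := by
          rw [hE.map_apply, hginj.preimage_image]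
      _ = (volume.withDensity (fun x => ENNReal.ofReal (q x))) (g '' s) := by rw [hpush]
      _ = ∫⁻ x in g '' s, ENNReal.ofReal (q x) ∂volume :=
          withDensity_apply _ (hE.measurableSet_image.2 hs)
      _ = ∫⁻ z in s, ENNReal.ofReal |(J z).det| * ENNReal.ofReal (q (g z)) ∂volume :=
          lintegral_image_eq_lintegral_abs_det_fderiv_mul volume hs
            (fun z _ => (hJ z).hasFDerivWithinAt) (hginj.injOn) _
  have key2 : ∀ᵐ z ∂(volume : Measure (Fin n → ℝ)), p z = |(J z).det| * q (g z) := by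
    refine key.mono fun z hz => ?_
    dsimp only at hz
    rw [← ENNReal.ofReal_mul (abs_nonneg _)] at hz
    exact (ENNReal.ofReal_eq_ofReal_iff (hp0 z)
      (mul_nonneg (abs_nonneg _) (hq0 _))).1 hz
  have main : ∀ᵐ z ∂(volume : Measure (Fin n → ℝ)), phat z * q (g z) = p z * μd (g z) := by
    refine key2.mono fun z hz => ?_
    rw [hphat, hz]; ring
  refine ⟨main, main.mono fun z hz hqz hμz => ?_⟩
  have hphatpos : 0 < phat z := by
    rw [hphat]
    exact mul_pos hμz (abs_pos.2 (hJdet z))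
  rw [div_eq_div_iff (ne_of_gt hphatpos) (ne_of_gt hμz)]
  linarith [hz]
end
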